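/- In the setting d1 = 1: let f1 = U0 X1 + U1 X2 and f2 = V0 X1^{d2} + ... + V_{d2} X2^{d2} form a regular sequence in A[X1,X2], with δ = d2 − 1. Define h_δ = sylv_{(0,0)}(f1,f2) and inductively h_{δ−i} = sylv_{(0,0)}(f1, h_{δ−i+1}) for i = 1,...,δ. Then for each ν with 0 ≤ ν ≤ δ−1, h_ν is an inertia form of f1, f2 of degree ν, i.e. h_ν ∈ H^0_m(B)_ν where B = A[X1,X2]/(f1,f2) and m = (X1,X2). -/
import Mathlib


open MvPolynomial

/-- `isSylv00 n f g s` : `s` is the Sylvester form `sylv_{(0,0)}(f, g)`, i.e. the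
determinant of a decomposition `f = X1·a1 + X2·a2`, `g = X1·b1 + X2·b2` with `a1, a2`
homogeneous of degree `n` (one less than the degree of `f`) and `b1, b2` homogeneous of
degree `m` (one less than the degree of `g`). -/
def isSylv00 {A : Type*} [CommRing A] (n m : ℕ) (f g s : MvPolynomial (Fin 2) A) : Prop :=
  ∃ a1 a2 b1 b2 : MvPolynomial (Fin 2) A,
    a1.IsHomogeneous n ∧ a2.IsHomogeneous n ∧
    b1.IsHomogeneous m ∧ b2.IsHomogeneous m ∧
    f = X 0 * a1 + X 1 * a2 ∧ g = X 0 * b1 + X 1 * b2 ∧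
    s = a1 * b2 - a2 * b1

/-- case `d1 = 1`. Let `f1 = U0 X1 + U1 X2` and
`f2 = V0 X1^{d2} + ... + V_{d2} X2^{d2}` form a regular sequence in `A[X1,X2]`, with
`δ = d2 − 1`.  Define `h_δ = sylv_{(0,0)}(f1,f2)` and inductively
`h_{δ−i} = sylv_{(0,0)}(f1, h_{δ−i+1})`.  Then for each `ν` with `0 ≤ ν ≤ δ − 1`, `h_ν`
is an inertia form of `f1, f2` of degree `ν`: it is homogeneous of degree `ν` and its
class lies in `H^0_m(B)_ν`, i.e. `m^k · h_ν ⊆ (f1, f2)` for some `k`. -/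
theorem stmt11 {A : Type*} [CommRing A] [Nontrivial A] (d2 : ℕ) (hd2 : 2 ≤ d2)
    (U0 U1 : A) (f1 f2 : MvPolynomial (Fin 2) A)
    (hf1 : f1 = C U0 * X 0 + C U1 * X 1)
    (hf2 : f2.IsHomogeneous d2)
    (hreg : RingTheory.Sequence.IsRegular (MvPolynomial (Fin 2) A) [f1, f2])
    (h : ℕ → MvPolynomial (Fin 2) A)
    (htop : isSylv00 0 (d2 - 1) f1 f2 (h (d2 - 1)))
    (hstep : ∀ ν < d2 - 1, isSylv00 0 ν f1 (h (ν + 1)) (h ν)) :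
    ∀ ν < d2 - 1,
      (h ν).IsHomogeneous ν ∧
      ∃ k : ℕ, ∀ g ∈ (Ideal.span {(X 0 : MvPolynomial (Fin 2) A), X 1}) ^ k,
        g * h ν ∈ Ideal.span {f1, f2} := by
  set M : Ideal (MvPolynomial (Fin 2) A) :=
    Ideal.span {(X 0 : MvPolynomial (Fin 2) A), X 1} with hM
  -- Key fact: from a Sylvester decomposition, m · s ⊆ (f, g).
  have key : ∀ (n m : ℕ) (f g s : MvPolynomial (Fin 2) A), isSylv00 n m f g s →
      ∀ x ∈ M, x * s ∈ Ideal.span {f, g} := by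
    rintro n m f g s ⟨a1, a2, b1, b2, _, _, _, _, hf, hg, hs⟩ x hx
    refine Submodule.span_induction ?_ ?_ ?_ ?_ hx
    · rintro y (rfl | rfl)
      · refine Ideal.mem_span_pair.2 ⟨b2, -a2, ?_⟩
        rw [hf, hg, hs]; ring
      · refine Ideal.mem_span_pair.2 ⟨-b1, a1, ?_⟩
        rw [hf, hg, hs]; ring
    · simp
    · intro y z _ _ hy hz
      rw [add_mul]; exact Ideal.add_mem _ hy hz
    · intro c y _ hy
      rw [smul_eq_mul, mul_assoc]; exact Ideal.mul_mem_left _ _ hy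
  -- Main induction: if ν + j = d2 - 1 then M^(j+1) · h ν ⊆ (f1, f2).
  have main : ∀ j ν, ν + j = d2 - 1 →
      ∀ g ∈ M ^ (j + 1), g * h ν ∈ Ideal.span {f1, f2} := by
    intro j
    induction j with
    | zero =>
      intro ν hν g hg
      rw [pow_one] at hg
      rw [Nat.add_zero] at hν
      subst hν
      exact key _ _ _ _ _ htop g hg
    | succ j ih =>
      intro ν hν g hg
      have hνlt : ν < d2 - 1 := by omega
      rw [pow_succ] at hg
      refine Submodule.mul_induction_on hg ?_ ?_
      · intro x hx y hy
        obtain ⟨c, d, hcd⟩ := Ideal.mem_span_pair.1 (key _ _ _ _ _ (hstep ν hνlt) y hy)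
        have hx' : x * h (ν + 1) ∈ Ideal.span {f1, f2} := ih (ν + 1) (by omega) x hx
        have : x * y * h ν = x * c * f1 + d * (x * h (ν + 1)) := by
          rw [mul_assoc, ← hcd]; ring
        rw [this]
        exact Ideal.add_mem _
          (Ideal.mul_mem_left _ _ (Ideal.subset_span (by simp)))
          (Ideal.mul_mem_left _ _ hx')
      · intro x y hx hy
        rw [add_mul]; exact Ideal.add_mem _ hx hy
  intro ν hν
  constructor
  · obtain ⟨a1, a2, b1, b2, ha1, ha2, hb1, hb2, _, _, hs⟩ := hstep ν hν
    rw [hs]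
    have := (ha1.mul hb2).sub (ha2.mul hb1)
    simpa using this
  · exact ⟨d2 - 1 - ν + 1, main (d2 - 1 - ν) ν (by omega)⟩
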